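/- arXiv:1310.5895 — 2 statements merged into one kernel-verified Lean document; each statement's English description precedes it below -/
import Mathlib

section
/- Let n ∈ ℕ, n ≥ 1, and set ñ = 4n−3. Let F be the ñ×ñ unitary DFT matrix and 𝒮_z : ℂ^n → ℂ^{ñ} the zero-padded symmetrization. Then for all x₁, x₂ ∈ ℂ^n with (x₁)_0, (x₂)_0 ∈ ℝ, if |F 𝒮_z(x₁)|² = |F 𝒮_z(x₂)|² (componentwise equality of squared moduli), then x₁ = x₂ or x₁ = −x₂. -/
/-!
The vector `v = 𝒮_z(x)` satisfies `v (-l) = conj (v l)` when `x₀` is real, so `F v` is real and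
equal moduli force `(F 𝒮_z x₁)_k = ±(F 𝒮_z x₂)_k` for every `k`. Since `𝒮_z` is additive, at each
of the `4n - 3` frequencies `F 𝒮_z (x₁ - x₂)` or `F 𝒮_z (x₁ + x₂)` vanishes, hence one of them
vanishes at `2n - 1` frequencies at least. Shifting `𝒮_z y` cyclically by `n - 1` multiplies its
DFT by roots of unity and moves its support into the first `2n - 1` entries; the DFT of such a
vector is, up to a factor, a polynomial of degree `< 2n - 1` evaluated at the distinct roots of
unity `ω^k`, so `2n - 1` zeros force `y = 0`.
-/

open scoped BigOperators

/-- Circular convolution on `ℂ^m`: `(u ⊛ v)_k = ∑_l u_l v_{(k-l) mod m}`. -/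
noncomputable def cconv {m : ℕ} (u v : Fin m → ℂ) : Fin m → ℂ :=
  fun k => ∑ l : Fin m, u l * v (k - l)

/-- Circular correlation on `ℂ^m`: `(u ⋆ v)_k = ∑_l u_l conj (v_{(k+l) mod m})`. -/
noncomputable def ccorr {m : ℕ} (u v : Fin m → ℂ) : Fin m → ℂ :=
  fun k => ∑ l : Fin m, u l * (starRingEnd ℂ) (v (k + l))

/-- Euclidean (ℓ²) norm of a vector. -/
noncomputable def euclNorm {m : ℕ} {E : Type*} [SeminormedAddGroup E] (x : Fin m → E) : ℝ :=
  Real.sqrt (∑ i, ‖x i‖ ^ 2)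

/-- Zero padding `ℂ^n → ℂ^m` (entries of `x` followed by zeros). -/
def pad (n m : ℕ) (x : Fin n → ℂ) : Fin m → ℂ :=
  fun k => if h : (k : ℕ) < n then x ⟨k, h⟩ else 0

/-- `x` has at most `s` nonzero entries. -/
def sparse {n : ℕ} (s : ℕ) (x : Fin n → ℂ) : Prop :=
  Set.ncard {i | x i ≠ 0} ≤ s

/-- The unitary DFT matrix `F_{kl} = m^{-1/2} exp(2πi kl/m)`. -/
noncomputable def dft (m : ℕ) : Matrix (Fin m) (Fin m) ℂ :=
  fun k l => ((Real.sqrt m : ℝ) : ℂ)⁻¹ *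
    Complex.exp (2 * (Real.pi : ℂ) * Complex.I * ((k : ℕ) : ℂ) * ((l : ℕ) : ℂ) / (m : ℂ))

/-- Cyclic shift: `(S x)_k = x_{(k-1) mod m}`. -/
def shiftOp {m : ℕ} (x : Fin m → ℂ) : Fin m → ℂ :=
  fun k => x ⟨((k : ℕ) + (m - 1)) % m, Nat.mod_lt _ (by have := k.isLt; omega)⟩

/-- Time reversal: `(Γ x)_k = x_{(-k) mod m}`. -/
def rev {m : ℕ} (u : Fin m → ℂ) : Fin m → ℂ := fun k => u (-k)

/-- Symmetrization `𝒮 : ℂ^n → ℂ^{2n-1}`,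
`𝒮(x) = (x_0, …, x_{n-1}, conj x_{n-1}, …, conj x_1)`. -/
noncomputable def symmetrize (n : ℕ) (x : Fin n → ℂ) : Fin (2 * n - 1) → ℂ :=
  fun k =>
    if h : (k : ℕ) < n then x ⟨k, h⟩
    else (starRingEnd ℂ) (x ⟨2 * n - 1 - (k : ℕ), by have := k.isLt; omega⟩)

/-- Zero-padded symmetrization `𝒮_z : ℂ^n → ℂ^{4n-3}`, `𝒮_z(x) = 𝒮((x, 0_{n-1}))`. -/
noncomputable def symmetrizeZ (n : ℕ) (x : Fin n → ℂ) : Fin (4 * n - 3) → ℂ :=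
  fun k => symmetrize (2 * n - 1) (pad n (2 * n - 1) x) ⟨(k : ℕ), by have := k.isLt; omega⟩

/-- `𝒮_z' : ℂ^n → ℂ^{4n-1}`,
`𝒮_z'(x) = (0_n, x_0, …, x_{n-1}, conj x_{n-1}, …, conj x_0, 0_{n-1})`. -/
noncomputable def symmetrizeZ' (n : ℕ) (x : Fin n → ℂ) : Fin (4 * n - 1) → ℂ :=
  fun k =>
    if _ : (k : ℕ) < n then 0
    else if h2 : (k : ℕ) < 2 * n then x ⟨(k : ℕ) - n, by omega⟩
    else if h3 : (k : ℕ) < 3 * n then (starRingEnd ℂ) (x ⟨3 * n - 1 - (k : ℕ), by omega⟩)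
    else 0

open Complex Polynomial Finset Matrix
open scoped ComplexConjugate

noncomputable def dftRoot (m : ℕ) : ℂ := exp (2 * Real.pi * I / m)

lemma isPrimitiveRoot_dftRoot {m : ℕ} (hm : m ≠ 0) : IsPrimitiveRoot (dftRoot m) m :=
  isPrimitiveRoot_exp m hm

lemma dftRoot_pow_eq_pow {m a b : ℕ} (h : a ≡ b [MOD m]) : dftRoot m ^ a = dftRoot m ^ b := by
  rcases Nat.eq_zero_or_pos m with rfl | hm
  · rw [Nat.modEq_zero_iff.mp h]
  · have hζ := isPrimitiveRoot_dftRoot hm.ne'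
    rwa [(hζ.isOfFinOrder hm.ne').pow_eq_pow_iff_modEq, ← hζ.eq_orderOf]

lemma conj_dftRoot (m : ℕ) : conj (dftRoot m) = (dftRoot m)⁻¹ := by
  rw [dftRoot, ← exp_conj, ← exp_neg]
  congr 1
  simp only [map_div₀, map_mul, map_ofNat, conj_ofReal, conj_I, map_natCast]
  ring

lemma dft_apply (m : ℕ) (k l : Fin m) :
    dft m k l = ((Real.sqrt m : ℝ) : ℂ)⁻¹ * dftRoot m ^ ((k : ℕ) * l) := by
  rw [dft, dftRoot, ← exp_nat_mul]
  push_cast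
  ring_nf

lemma dft_apply_add (m : ℕ) (k l a : Fin m) :
    dft m k (l + a) = dft m k l * dftRoot m ^ ((k : ℕ) * a) := by
  rw [dft_apply, dft_apply, mul_assoc, ← pow_add, ← mul_add, Fin.val_add]
  exact congrArg _ (dftRoot_pow_eq_pow ((Nat.mod_modEq _ _).mul_left _))

lemma conj_dft_apply (m : ℕ) (k l : Fin m) : conj (dft m k l) = dft m k (-l) := by
  have hsum : (k : ℕ) * (-l : Fin m) + k * l ≡ 0 [MOD m] := by
    rw [← mul_add]
    refine (Nat.ModEq.mul_left _ ?_).trans (by rw [mul_zero])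
    rw [Fin.val_neg']
    refine ((Nat.mod_modEq _ _).add_right _).trans ?_
    rw [Nat.sub_add_cancel l.is_lt.le]
    exact Nat.modEq_zero_iff_dvd.mpr dvd_rfl
  have hinv : dftRoot m ^ ((k : ℕ) * (-l : Fin m)) = (dftRoot m ^ ((k : ℕ) * l))⁻¹ :=
    eq_inv_of_mul_eq_one_left (by rw [← pow_add, dftRoot_pow_eq_pow hsum, pow_zero])
  rw [dft_apply, dft_apply, map_mul, map_inv₀, conj_ofReal, map_pow, conj_dftRoot, inv_pow, hinv]

lemma conj_dft_mulVec_of_conj_symm {m : ℕ} (v : Fin m → ℂ) (hv : ∀ l, v (-l) = conj (v l))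
    (k : Fin m) : conj ((dft m *ᵥ v) k) = (dft m *ᵥ v) k := by
  have : NeZero m := ⟨k.pos.ne'⟩
  simp only [Matrix.mulVec, dotProduct, map_sum, map_mul, conj_dft_apply, ← hv]
  exact Fintype.sum_equiv (Equiv.neg _) _ _ fun l => rfl

lemma dft_mulVec_apply_of_apply_add {m : ℕ} (u v : Fin m → ℂ) (a : Fin m)
    (h : ∀ l, u (l + a) = v l) (k : Fin m) :
    (dft m *ᵥ u) k = dftRoot m ^ ((k : ℕ) * a) * (dft m *ᵥ v) k := by
  have : NeZero m := ⟨k.pos.ne'⟩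
  simp only [mulVec, dotProduct, mul_sum]
  refine (Fintype.sum_equiv (Equiv.addRight a) _ _ fun l => ?_).symm
  rw [Equiv.coe_addRight, h, dft_apply_add]
  ring

lemma dft_mulVec_apply_eq_eval {m : ℕ} (u : Fin m → ℂ) (k : Fin m) :
    (dft m *ᵥ u) k = ((Real.sqrt m : ℝ) : ℂ)⁻¹ *
      (∑ i, C (u i) * X ^ (i : ℕ)).eval (dftRoot m ^ (k : ℕ)) := by
  simp only [Matrix.mulVec, dotProduct, dft_apply, eval_finsetSum, eval_mul, eval_C, eval_pow,
    eval_X, mul_sum, ← pow_mul]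
  exact sum_congr rfl fun i _ => by ring

lemma eq_zero_of_le_card_dft_mulVec_eq_zero {m d : ℕ} (u : Fin m → ℂ)
    (hu : ∀ i : Fin m, d ≤ i → u i = 0) (hd : d ≤ #{k | (dft m *ᵥ u) k = 0}) : u = 0 := by
  funext i
  obtain rfl | hd0 := d.eq_zero_or_pos
  · exact hu i (Nat.zero_le _)
  set p : ℂ[X] := ∑ j, C (u j) * X ^ (j : ℕ)
  have hdeg : p.natDegree < d := by
    refine Nat.lt_of_le_sub_one hd0 (natDegree_sum_le_of_forall_le _ _ fun j _ => ?_)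
    by_cases hj : d ≤ j
    · simp [hu j hj]
    · exact (natDegree_C_mul_X_pow_le _ _).trans (by omega)
  have hroot (k : {k // (dft m *ᵥ u) k = 0}) : p.eval (dftRoot m ^ (k.1 : ℕ)) = 0 := by
    have hsqrt : ((Real.sqrt m : ℝ) : ℂ)⁻¹ ≠ 0 := by
      simpa [Real.sqrt_eq_zero'] using i.pos.ne'
    simpa [hsqrt, k.2] using (dft_mulVec_apply_eq_eval u k.1).symm
  have hinj : Function.Injective fun k : Fin m => dftRoot m ^ (k : ℕ) := fun k l h =>
    Fin.ext ((isPrimitiveRoot_dftRoot i.pos.ne').pow_inj k.is_lt l.is_lt h)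
  have hp : p = 0 := eq_zero_of_natDegree_lt_card_of_eval_eq_zero p
    (hinj.comp Subtype.val_injective) hroot
    (hdeg.trans_le (hd.trans_eq (Fintype.card_subtype _).symm))
  simpa [p, finsetSum_coeff, coeff_C_mul_X_pow, Fin.val_inj] using congrArg (coeff · i) hp

def extendByZero {n : ℕ} (x : Fin n → ℂ) (j : ℕ) : ℂ :=
  if h : j < n then x ⟨j, h⟩ else 0

lemma extendByZero_of_lt {n j : ℕ} (x : Fin n → ℂ) (h : j < n) :
    extendByZero x j = x ⟨j, h⟩ :=
  dif_pos h

lemma extendByZero_of_le {n j : ℕ} (x : Fin n → ℂ) (h : n ≤ j) : extendByZero x j = 0 :=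
  dif_neg h.not_gt

lemma extendByZero_add {n : ℕ} (x y : Fin n → ℂ) (j : ℕ) :
    extendByZero (x + y) j = extendByZero x j + extendByZero y j := by
  unfold extendByZero
  split_ifs <;> simp

lemma extendByZero_sub {n : ℕ} (x y : Fin n → ℂ) (j : ℕ) :
    extendByZero (x - y) j = extendByZero x j - extendByZero y j := by
  unfold extendByZero
  split_ifs <;> simp

lemma symmetrizeZ_apply (n : ℕ) (x : Fin n → ℂ) (l : Fin (4 * n - 3)) :
    symmetrizeZ n x l = extendByZero x l + conj (extendByZero x (4 * n - 3 - l)) := by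
  have := l.is_lt
  simp only [symmetrizeZ, symmetrize, pad, extendByZero,
    show 2 * (2 * n - 1) - 1 = 4 * n - 3 by omega]
  split_ifs <;> first | omega | simp

lemma symmetrizeZ_add (n : ℕ) (x y : Fin n → ℂ) :
    symmetrizeZ n (x + y) = symmetrizeZ n x + symmetrizeZ n y := by
  funext l
  simp only [symmetrizeZ_apply, Pi.add_apply, extendByZero_add, map_add]
  ring

lemma symmetrizeZ_sub (n : ℕ) (x y : Fin n → ℂ) :
    symmetrizeZ n (x - y) = symmetrizeZ n x - symmetrizeZ n y := by
  funext l
  simp only [symmetrizeZ_apply, Pi.sub_apply, extendByZero_sub, map_sub]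
  ring

lemma symmetrizeZ_apply_neg {n : ℕ} (hn : 0 < n) (x : Fin n → ℂ)
    (hx : conj (x ⟨0, hn⟩) = x ⟨0, hn⟩) (l : Fin (4 * n - 3)) :
    symmetrizeZ n x (-l) = conj (symmetrizeZ n x l) := by
  have := l.is_lt
  rw [symmetrizeZ_apply, symmetrizeZ_apply, Fin.val_neg', map_add, conj_conj]
  obtain hl | hl := Nat.eq_zero_or_pos (l : ℕ)
  · rw [hl, Nat.sub_zero, Nat.mod_self, Nat.sub_zero, extendByZero_of_lt x hn, hx,
      extendByZero_of_le x (by omega), map_zero]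
  · rw [Nat.mod_eq_of_lt (by omega : 4 * n - 3 - l < 4 * n - 3), Nat.sub_sub_self this.le,
      add_comm]

lemma eq_zero_of_le_card_dft_symmetrizeZ_eq_zero {n : ℕ} (y : Fin n → ℂ)
    (hy : 2 * n - 1 ≤ #{k | (dft (4 * n - 3) *ᵥ symmetrizeZ n y) k = 0}) : y = 0 := by
  funext i
  have hi := i.is_lt
  have : NeZero (4 * n - 3) := ⟨by omega⟩
  set a : Fin (4 * n - 3) := ⟨n - 1, by omega⟩
  set u : Fin (4 * n - 3) → ℂ := fun l => symmetrizeZ n y (l - a)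
  have hu : u = 0 := by
    refine eq_zero_of_le_card_dft_mulVec_eq_zero u (d := 2 * n - 1) (fun l hl => ?_)
      (hy.trans (card_le_card fun k hk => ?_))
    · have hval : ((l - a : Fin (4 * n - 3)) : ℕ) = l - (n - 1) := by
        rw [Fin.val_sub, show (a : ℕ) = n - 1 from rfl, Nat.mod_eq_sub_mod (by omega),
          Nat.mod_eq_of_lt (by omega)]
        omega
      simp only [u, symmetrizeZ_apply, hval, extendByZero_of_le y (by omega : n ≤ l - (n - 1)),
        extendByZero_of_le y (by omega : n ≤ 4 * n - 3 - (l - (n - 1))), map_zero, add_zero]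
    · simp only [mem_filter, mem_univ, true_and] at hk ⊢
      rw [dft_mulVec_apply_of_apply_add u (symmetrizeZ n y) a (fun l => by simp [u]) k, hk,
        mul_zero]
  have := congrFun hu (⟨i, by omega⟩ + a)
  simp only [u, add_sub_cancel_right, symmetrizeZ_apply] at this
  rwa [extendByZero_of_lt y hi, extendByZero_of_le y (by omega), map_zero, add_zero] at this

lemma eq_or_eq_neg_of_sq_norm_eq {a b : ℂ} (ha : conj a = a) (hb : conj b = b)
    (h : ‖a‖ ^ 2 = ‖b‖ ^ 2) : a = b ∨ a = -b := by
  obtain ⟨r, rfl⟩ := conj_eq_iff_real.mp ha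
  obtain ⟨s, rfl⟩ := conj_eq_iff_real.mp hb
  rw [norm_real, norm_real, Real.norm_eq_abs, Real.norm_eq_abs, sq_abs, sq_abs] at h
  rcases sq_eq_sq_iff_eq_or_eq_neg.mp h with rfl | rfl
  · exact Or.inl rfl
  · exact Or.inr (ofReal_neg s)

lemma le_card_filter_or_le_card_filter {α : Type*} [Fintype α] {p q : α → Prop}
    [DecidablePred p] [DecidablePred q] {d : ℕ} (h : ∀ a, p a ∨ q a)
    (hα : 2 * d - 1 ≤ Fintype.card α) : d ≤ #{a | p a} ∨ d ≤ #{a | q a} := by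
  have hcover : Fintype.card α ≤ #{a | p a} + #{a | q a} := by
    classical
    rw [← card_univ]
    refine (card_le_card fun a _ => ?_).trans (card_union_le _ _)
    simpa using h a
  omega

/-- Injectivity up to global sign of magnitude Fourier measurements of
zero-padded symmetrized vectors. -/
theorem injectivity_symmetrizeZ (n : ℕ) (hn : 0 < n) (x₁ x₂ : Fin n → ℂ)
    (h₁ : (x₁ ⟨0, hn⟩).im = 0) (h₂ : (x₂ ⟨0, hn⟩).im = 0)
    (h : ∀ k, ‖(dft (4 * n - 3)).mulVec (symmetrizeZ n x₁) k‖ ^ 2 =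
      ‖(dft (4 * n - 3)).mulVec (symmetrizeZ n x₂) k‖ ^ 2) :
    x₁ = x₂ ∨ x₁ = -x₂ := by
  have hreal : ∀ x : Fin n → ℂ, (x ⟨0, hn⟩).im = 0 → ∀ k,
      conj ((dft (4 * n - 3) *ᵥ symmetrizeZ n x) k) = (dft (4 * n - 3) *ᵥ symmetrizeZ n x) k :=
    fun x hx => conj_dft_mulVec_of_conj_symm _ (symmetrizeZ_apply_neg hn x (conj_eq_iff_im.mpr hx))
  have hzero : ∀ k, (dft (4 * n - 3) *ᵥ symmetrizeZ n (x₁ - x₂)) k = 0 ∨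
      (dft (4 * n - 3) *ᵥ symmetrizeZ n (x₁ + x₂)) k = 0 := by
    intro k
    rw [symmetrizeZ_sub, symmetrizeZ_add, mulVec_sub, mulVec_add, Pi.sub_apply, Pi.add_apply,
      sub_eq_zero, add_eq_zero_iff_eq_neg]
    exact eq_or_eq_neg_of_sq_norm_eq (hreal x₁ h₁ k) (hreal x₂ h₂ k) (h k)
  have hcard : 2 * (2 * n - 1) - 1 ≤ Fintype.card (Fin (4 * n - 3)) := by
    rw [Fintype.card_fin]
    omega
  rcases le_card_filter_or_le_card_filter hzero hcard with hsub | hadd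
  · exact Or.inl (sub_eq_zero.mp (eq_zero_of_le_card_dft_symmetrizeZ_eq_zero _ hsub))
  · exact Or.inr (eq_neg_of_add_eq_zero_left (eq_zero_of_le_card_dft_symmetrizeZ_eq_zero _ hadd))
end

section
/- Let n ∈ ℕ, n ≥ 1, and set ñ = 4n−1. Let F be the ñ×ñ unitary DFT matrix and let 𝒮_z' : ℂ^n → ℂ^{ñ} be defined by 𝒮_z'(x) = (0_n, x_0, …, x_{n−1}, conj(x_{n−1}), …, conj(x_0), 0_{n−1}). Then there exists a constant c > 0 (depending only on ñ) such that for all x₁, x₂ ∈ ℂ^n, it holds that ‖ |F 𝒮_z'(x₁)|² − |F 𝒮_z'(x₂)|² ‖ ≥ c · ‖x₁ − x₂‖ · ‖x₁ + x₂‖. -/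
open scoped BigOperators

/-! Since `𝒮_z'(x)` is conjugate symmetric, `F 𝒮_z'(x)` is real; as `𝒮_z'` is `ℝ`-linear,
`|F 𝒮_z'(x₁)|² - |F 𝒮_z'(x₂)|² = F 𝒮_z'(x₁ - x₂) ⊙ F 𝒮_z'(x₁ + x₂)` (entrywise product).
Up to a unimodular factor, `(F 𝒮_z'(x))_k` is the value at the `k`-th `(4n-1)`-th root of unity of
a polynomial of degree `< 2n`, so for `x ≠ 0` it vanishes at fewer than `2n` of the `4n - 1`
indices, and the entrywise product above is a bilinear map without zero divisors. On a product of
unit spheres, which is compact, its norm has a positive minimum `c`; bilinearity gives the bound. -/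

open Finset Polynomial Matrix

section Bilinear

variable {E F G : Type*} [NormedAddCommGroup E] [NormedSpace ℝ E] [FiniteDimensional ℝ E]
  [NormedAddCommGroup F] [NormedSpace ℝ F] [FiniteDimensional ℝ F]
  [NormedAddCommGroup G] [NormedSpace ℝ G]

theorem LinearMap.exists_pos_mul_norm_mul_norm_le_norm_apply₂ (B : E →ₗ[ℝ] F →ₗ[ℝ] G)
    (hB : ∀ d s, B d s = 0 → d = 0 ∨ s = 0) :
    ∃ c > 0, ∀ d s, c * ‖d‖ * ‖s‖ ≤ ‖B d s‖ := by
  let B' : E →L[ℝ] F →L[ℝ] G :=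
    LinearMap.toContinuousLinearMap (LinearMap.toContinuousLinearMap.toLinearMap ∘ₗ B)
  have hcont : Continuous fun p : E × F => ‖B p.1 p.2‖ := B'.continuous₂.norm
  have hpos : ∀ p ∈ Metric.sphere (0 : E) 1 ×ˢ Metric.sphere (0 : F) 1, 0 < ‖B p.1 p.2‖ := by
    rintro ⟨d, s⟩ ⟨hd, hs⟩
    refine norm_pos_iff.2 fun h => ?_
    rcases hB d s h with rfl | rfl <;> simp_all
  obtain ⟨c, hc, hmin⟩ := ((isCompact_sphere (0 : E) 1).prod
    (isCompact_sphere (0 : F) 1)).exists_forall_le' hcont.continuousOn hpos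
  refine ⟨c, hc, fun d s => ?_⟩
  rcases eq_or_ne d 0 with rfl | hd
  · simp
  rcases eq_or_ne s 0 with rfl | hs
  · simp
  have hd' : 0 < ‖d‖ := norm_pos_iff.2 hd
  have hs' : 0 < ‖s‖ := norm_pos_iff.2 hs
  have := hmin (‖d‖⁻¹ • d, ‖s‖⁻¹ • s) ⟨by simp [norm_smul, hd], by simp [norm_smul, hs]⟩
  simp only [map_smul, LinearMap.smul_apply, norm_smul, norm_inv, norm_norm] at this
  rw [le_inv_mul_iff₀ hs', le_inv_mul_iff₀ hd'] at this
  linarith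

end Bilinear

section DFT

variable {m : ℕ}

theorem dft_apply_eq_pow (k l : Fin m) :
    dft m k l = ((√m : ℝ) : ℂ)⁻¹ *
      (Complex.exp (2 * Real.pi * Complex.I / m) ^ (k : ℕ)) ^ (l : ℕ) := by
  rw [dft, ← pow_mul, ← Complex.exp_nat_mul]
  congr 2
  push_cast
  ring

theorem star_dft_apply_neg (k l : Fin m) : star (dft m k (-l)) = dft m k l := by
  have hm : m ≠ 0 := l.pos.ne'
  have : NeZero m := ⟨hm⟩
  set ζ := Complex.exp (2 * Real.pi * Complex.I / m)
  have hζ : IsPrimitiveRoot ζ m := Complex.isPrimitiveRoot_exp m hm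
  have hw : star (ζ ^ (k : ℕ)) = (ζ ^ (k : ℕ))⁻¹ :=
    (Complex.inv_eq_conj (by rw [norm_pow, hζ.norm'_eq_one hm, one_pow])).symm
  obtain ⟨t, ht⟩ : m ∣ ((-l : Fin m) : ℕ) + l := by
    rw [Nat.dvd_iff_mod_eq_zero, ← Fin.val_add, neg_add_cancel, Fin.val_zero]
  have hone : (ζ ^ (k : ℕ)) ^ ((-l : Fin m) : ℕ) * (ζ ^ (k : ℕ)) ^ (l : ℕ) = 1 := by
    rw [← pow_add, ht, ← pow_mul, mul_comm, pow_mul, pow_mul, hζ.pow_eq_one, one_pow, one_pow]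
  rw [dft_apply_eq_pow, dft_apply_eq_pow, star_mul', star_pow, hw, inv_pow, ← Complex.ofReal_inv,
    Complex.star_def, Complex.conj_ofReal, inv_eq_of_mul_eq_one_right hone]

theorem dft_mulVec_im_eq_zero {y : Fin m → ℂ} (hy : ∀ l, y (-l) = star (y l)) (k : Fin m) :
    ((dft m *ᵥ y) k).im = 0 := by
  rw [← Complex.conj_eq_iff_im, ← Complex.star_def]
  simp only [mulVec, dotProduct, star_sum, star_mul']
  exact Fintype.sum_equiv (Equiv.neg _) _ _ fun l => by
    rw [Equiv.neg_apply, ← hy, ← star_dft_apply_neg, star_star]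

theorem dft_mulVec_apply (y : Fin m → ℂ) (k : Fin m) :
    (dft m *ᵥ y) k = ((√m : ℝ) : ℂ)⁻¹ *
      ∑ l, y l * (Complex.exp (2 * Real.pi * Complex.I / m) ^ (k : ℕ)) ^ (l : ℕ) := by
  simp only [mulVec, dotProduct, dft_apply_eq_pow, mul_sum]
  exact sum_congr rfl fun l _ => by ring

theorem card_lt_of_sum_mul_pow_eq_zero {y : Fin m → ℂ} (hy : y ≠ 0) {a L : ℕ}
    (hsupp : ∀ l, y l ≠ 0 → a ≤ l ∧ (l : ℕ) < a + L) {S : Finset ℂ} (hS₀ : ∀ z ∈ S, z ≠ 0)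
    (hS : ∀ z ∈ S, ∑ l, y l * z ^ (l : ℕ) = 0) : #S < L := by
  let P : ℂ[X] := ∑ l, C (y l) * X ^ ((l : ℕ) - a)
  have heval : ∀ z, z ^ a * P.eval z = ∑ l, y l * z ^ (l : ℕ) := by
    intro z
    simp only [P, eval_finsetSum, eval_mul, eval_C, eval_pow, eval_X, Finset.mul_sum]
    refine sum_congr rfl fun l _ => ?_
    rcases eq_or_ne (y l) 0 with hl | hl
    · simp [hl]
    · rw [mul_left_comm, ← pow_add, Nat.add_sub_cancel' (hsupp l hl).1]
  obtain ⟨l₀, hl₀⟩ : ∃ l, y l ≠ 0 := Function.ne_iff.1 hy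
  have hcoeff : P.coeff ((l₀ : ℕ) - a) = y l₀ := by
    simp only [P, finsetSum_coeff, coeff_C_mul_X_pow]
    refine (sum_eq_single l₀ (fun l _ hl => ?_) (by simp)).trans (if_pos rfl)
    rcases eq_or_ne (y l) 0 with h0 | h0
    · simp [h0]
    refine if_neg fun h => hl (Fin.ext ?_)
    have := hsupp l h0
    have := hsupp l₀ hl₀
    omega
  have hP : P ≠ 0 := fun h => hl₀ (by rw [← hcoeff, h, coeff_zero])
  have hdeg : P.natDegree ≤ L - 1 := by
    refine natDegree_sum_le_of_forall_le _ _ fun l _ => ?_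
    rcases eq_or_ne (y l) 0 with hl | hl
    · simp [hl]
    · have := hsupp l hl
      exact (natDegree_C_mul_X_pow_le _ _).trans (by omega)
  calc #S ≤ #P.roots.toFinset := card_le_card fun z hz => by
          rw [Multiset.mem_toFinset, mem_roots hP, IsRoot.def,
            ← mul_right_inj' (pow_ne_zero a (hS₀ z hz)), heval, hS z hz, mul_zero]
    _ ≤ Multiset.card P.roots := Multiset.toFinset_card_le _
    _ ≤ P.natDegree := card_roots' P
    _ < L := by have := hsupp l₀ hl₀; omega

theorem card_filter_dft_mulVec_eq_zero_lt {y : Fin m → ℂ} (hy : y ≠ 0) {a L : ℕ}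
    (hsupp : ∀ l, y l ≠ 0 → a ≤ l ∧ (l : ℕ) < a + L) :
    #{k | (dft m *ᵥ y) k = 0} < L := by
  obtain ⟨l₀, -⟩ := Function.ne_iff.1 hy
  have hm : m ≠ 0 := l₀.pos.ne'
  set ζ := Complex.exp (2 * Real.pi * Complex.I / m)
  have hζ : IsPrimitiveRoot ζ m := Complex.isPrimitiveRoot_exp m hm
  have hc : ((√m : ℝ) : ℂ)⁻¹ ≠ 0 := by simp [hm]
  rw [← card_image_of_injOn (f := fun k : Fin m => ζ ^ (k : ℕ))
    fun k _ k' _ h => Fin.ext (hζ.pow_inj k.isLt k'.isLt h)]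
  refine card_lt_of_sum_mul_pow_eq_zero hy hsupp ?_ ?_ <;>
    simp only [mem_image, mem_filter, mem_univ, true_and] <;> rintro _ ⟨k, hk, rfl⟩
  · exact pow_ne_zero _ (Complex.exp_ne_zero _)
  · rwa [dft_mulVec_apply, mul_eq_zero, or_iff_right hc] at hk

end DFT

section SymmetrizeZ'

variable {n : ℕ}

theorem symmetrizeZ'_add (x₁ x₂ : Fin n → ℂ) :
    symmetrizeZ' n (x₁ + x₂) = symmetrizeZ' n x₁ + symmetrizeZ' n x₂ := by
  ext k
  simp only [symmetrizeZ', Pi.add_apply]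
  split_ifs <;> simp

theorem symmetrizeZ'_smul (t : ℝ) (x : Fin n → ℂ) :
    symmetrizeZ' n (t • x) = t • symmetrizeZ' n x := by
  ext k
  simp only [symmetrizeZ', Pi.smul_apply]
  split_ifs <;> simp [Complex.real_smul]

noncomputable def symmetrizeZ'ₗ (n : ℕ) : (Fin n → ℂ) →ₗ[ℝ] Fin (4 * n - 1) → ℂ where
  toFun := symmetrizeZ' n
  map_add' := symmetrizeZ'_add
  map_smul' := symmetrizeZ'_smul

theorem symmetrizeZ'_neg_apply (x : Fin n → ℂ) (k : Fin (4 * n - 1)) :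
    symmetrizeZ' n x (-k) = star (symmetrizeZ' n x k) := by
  have : NeZero (4 * n - 1) := ⟨k.pos.ne'⟩
  have hsum : ((-k : Fin (4 * n - 1)) : ℕ) + k = 0 ∨
      ((-k : Fin (4 * n - 1)) : ℕ) + k = 4 * n - 1 := by
    obtain ⟨t, ht⟩ : 4 * n - 1 ∣ ((-k : Fin (4 * n - 1)) : ℕ) + k := by
      rw [Nat.dvd_iff_mod_eq_zero, ← Fin.val_add, neg_add_cancel, Fin.val_zero]
    have : t < 2 := by nlinarith [k.isLt, (-k).isLt]
    interval_cases t <;> simp [ht]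
  have := k.isLt
  simp only [symmetrizeZ']
  split_ifs <;> simp only [Complex.star_def, map_zero, Complex.conj_conj] <;>
    first
    | omega
    | (congr 1; simp only [Fin.mk.injEq]; omega)
    | (congr 2; simp only [Fin.mk.injEq]; omega)

theorem symmetrizeZ'_apply_ne_zero {x : Fin n → ℂ} {k : Fin (4 * n - 1)}
    (hk : symmetrizeZ' n x k ≠ 0) : n ≤ k ∧ (k : ℕ) < n + 2 * n := by
  simp only [symmetrizeZ'] at hk
  split_ifs at hk <;> first | omega | exact absurd rfl hk

theorem symmetrizeZ'_ne_zero {x : Fin n → ℂ} (hx : x ≠ 0) : symmetrizeZ' n x ≠ 0 := by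
  obtain ⟨i, hi⟩ := Function.ne_iff.1 hx
  refine Function.ne_iff.2 ⟨⟨n + i, by omega⟩, ?_⟩
  have : n + i < 2 * n := by omega
  simpa [symmetrizeZ', this] using hi

end SymmetrizeZ'

noncomputable def reDftSymmetrizeZ' (n : ℕ) : (Fin n → ℂ) →ₗ[ℝ] Fin (4 * n - 1) → ℝ :=
  LinearMap.pi fun k => Complex.reLm ∘ₗ LinearMap.proj k ∘ₗ
    (dft (4 * n - 1)).mulVecLin.restrictScalars ℝ ∘ₗ symmetrizeZ'ₗ n

section ReDftSymmetrizeZ'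

variable {n : ℕ}

theorem reDftSymmetrizeZ'_apply (x : Fin n → ℂ) (k : Fin (4 * n - 1)) :
    reDftSymmetrizeZ' n x k = ((dft (4 * n - 1) *ᵥ symmetrizeZ' n x) k).re :=
  rfl

theorem dft_mulVec_symmetrizeZ'_im (x : Fin n → ℂ) (k : Fin (4 * n - 1)) :
    ((dft (4 * n - 1) *ᵥ symmetrizeZ' n x) k).im = 0 :=
  dft_mulVec_im_eq_zero (symmetrizeZ'_neg_apply x) k

theorem sq_norm_dft_mulVec_symmetrizeZ' (x : Fin n → ℂ) (k : Fin (4 * n - 1)) :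
    ‖(dft (4 * n - 1) *ᵥ symmetrizeZ' n x) k‖ ^ 2 = reDftSymmetrizeZ' n x k ^ 2 := by
  rw [Complex.sq_norm, Complex.normSq_apply, dft_mulVec_symmetrizeZ'_im, reDftSymmetrizeZ'_apply]
  ring

theorem reDftSymmetrizeZ'_eq_zero_iff {x : Fin n → ℂ} {k : Fin (4 * n - 1)} :
    reDftSymmetrizeZ' n x k = 0 ↔ (dft (4 * n - 1) *ᵥ symmetrizeZ' n x) k = 0 := by
  rw [Complex.ext_iff, dft_mulVec_symmetrizeZ'_im, reDftSymmetrizeZ'_apply]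
  simp

theorem card_filter_reDftSymmetrizeZ'_eq_zero_lt {x : Fin n → ℂ} (hx : x ≠ 0) :
    #{k | reDftSymmetrizeZ' n x k = 0} < 2 * n := by
  simp only [reDftSymmetrizeZ'_eq_zero_iff]
  exact card_filter_dft_mulVec_eq_zero_lt (symmetrizeZ'_ne_zero hx)
    fun _ => symmetrizeZ'_apply_ne_zero

theorem reDftSymmetrizeZ'_mul_eq_zero {d s : Fin n → ℂ}
    (h : reDftSymmetrizeZ' n d * reDftSymmetrizeZ' n s = 0) : d = 0 ∨ s = 0 := by
  by_contra! hds
  let Z : (Fin n → ℂ) → Finset (Fin (4 * n - 1)) := fun x => {k | reDftSymmetrizeZ' n x k = 0}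
  have hcover : Z d ∪ Z s = univ :=
    eq_univ_of_forall fun k => by simpa [Z, mul_eq_zero] using congrFun h k
  have hd : #(Z d) < 2 * n := card_filter_reDftSymmetrizeZ'_eq_zero_lt hds.1
  have hs : #(Z s) < 2 * n := card_filter_reDftSymmetrizeZ'_eq_zero_lt hds.2
  have := card_union_le (Z d) (Z s)
  rw [hcover, card_univ, Fintype.card_fin] at this
  omega

theorem sq_norm_dft_symmetrizeZ'_sub_sq_norm (x₁ x₂ : Fin n → ℂ) :
    (fun k => ‖(dft (4 * n - 1) *ᵥ symmetrizeZ' n x₁) k‖ ^ 2 -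
        ‖(dft (4 * n - 1) *ᵥ symmetrizeZ' n x₂) k‖ ^ 2) =
      reDftSymmetrizeZ' n (x₁ - x₂) * reDftSymmetrizeZ' n (x₁ + x₂) := by
  ext k
  simp only [sq_norm_dft_mulVec_symmetrizeZ', map_sub, map_add, Pi.mul_apply, Pi.sub_apply,
    Pi.add_apply]
  ring

end ReDftSymmetrizeZ'

theorem euclNorm_eq_norm_toLp {m : ℕ} {E : Type*} [SeminormedAddCommGroup E] (x : Fin m → E) :
    euclNorm x = ‖(WithLp.toLp 2 x : PiLp 2 fun _ : Fin m => E)‖ :=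
  (PiLp.norm_eq_of_L2 _).symm

theorem stable_recovery_symmetrizeZ_prime_general (n : ℕ) :
    ∃ c : ℝ, 0 < c ∧ ∀ x₁ x₂ : Fin n → ℂ,
      c * euclNorm (x₁ - x₂) * euclNorm (x₁ + x₂) ≤
        euclNorm (fun k => ‖(dft (4 * n - 1)).mulVec (symmetrizeZ' n x₁) k‖ ^ 2 -
          ‖(dft (4 * n - 1)).mulVec (symmetrizeZ' n x₂) k‖ ^ 2) := by
  -- the entrywise product `(d, s) ↦ T d ⊙ T s`, between `ℓ²` spaces so that norms are `euclNorm`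
  let T := reDftSymmetrizeZ' n ∘ₗ (WithLp.linearEquiv 2 ℝ (Fin n → ℂ)).toLinearMap
  let B : EuclideanSpace ℂ (Fin n) →ₗ[ℝ] EuclideanSpace ℂ (Fin n) →ₗ[ℝ]
      EuclideanSpace ℝ (Fin (4 * n - 1)) :=
    ((LinearMap.mul ℝ _).compr₂ (WithLp.linearEquiv 2 ℝ _).symm.toLinearMap).compl₁₂ T T
  obtain ⟨c, hc, hB⟩ := B.exists_pos_mul_norm_mul_norm_le_norm_apply₂ fun d s h => by
    have h' : reDftSymmetrizeZ' n d.ofLp * reDftSymmetrizeZ' n s.ofLp = 0 := by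
      simpa [B, T] using h
    simpa using reDftSymmetrizeZ'_mul_eq_zero h'
  refine ⟨c, hc, fun x₁ x₂ => ?_⟩
  rw [sq_norm_dft_symmetrizeZ'_sub_sq_norm, euclNorm_eq_norm_toLp, euclNorm_eq_norm_toLp,
    euclNorm_eq_norm_toLp]
  exact hB (WithLp.toLp 2 (x₁ - x₂)) (WithLp.toLp 2 (x₁ + x₂))

/-- Stability of the `4n-1` magnitude Fourier measurements of `𝒮_z'` for all
complex vectors. -/
theorem stable_recovery_symmetrizeZ_prime (n : ℕ) (hn : 0 < n) :
    ∃ c : ℝ, 0 < c ∧ ∀ x₁ x₂ : Fin n → ℂ,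
      c * euclNorm (x₁ - x₂) * euclNorm (x₁ + x₂) ≤
        euclNorm (fun k => ‖(dft (4 * n - 1)).mulVec (symmetrizeZ' n x₁) k‖ ^ 2 -
          ‖(dft (4 * n - 1)).mulVec (symmetrizeZ' n x₂) k‖ ^ 2) :=
  stable_recovery_symmetrizeZ_prime_general n
end
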